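/- Let k ≥ 1 be an integer and let f_k : ℝ → ℝ be defined by f_k(θ) = θ^{k+1}(π−θ)^{k+1}. Then there exists a polynomial q with real coefficients such that for all θ ∈ ℝ, f_k^{(k)}(θ) = (k+1)!·(−1)^k·θ^{k+1}·(π−θ) + (π−θ)²·q(θ). -/
import Mathlib

open Polynomial

lemma iteratedDeriv_polynomial_eval (p : Polynomial ℝ) (n : ℕ) :
    iteratedDeriv n (fun x : ℝ => p.eval x) = fun x => (derivative^[n] p).eval x := by
  induction n with
  | zero => simp
  | succ n ih =>
    rw [iteratedDeriv_succ, ih, Function.iterate_succ_apply']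
    funext x
    exact Polynomial.deriv (p := derivative^[n] p)

lemma iterate_derivative_sub_pow (a : ℝ) (n m : ℕ) (h : m ≤ n) :
    derivative^[m] ((C a - X) ^ n) =
      (-1 : Polynomial ℝ) ^ m * (Nat.descFactorial n m : Polynomial ℝ) * (C a - X) ^ (n - m) := by
  induction m with
  | zero => simp
  | succ m ih =>
    rw [Function.iterate_succ_apply', ih (Nat.le_of_succ_le h)]
    have h1 : 1 ≤ n - m := by omega
    simp only [derivative_mul, derivative_pow, derivative_natCast, derivative_neg,
      derivative_one, derivative_sub, derivative_C, derivative_X, neg_zero, mul_zero,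
      zero_mul, add_zero, zero_add, zero_sub, mul_neg, mul_one, C_eq_natCast]
    have hdesc : (Nat.descFactorial n (m+1) : Polynomial ℝ)
        = (Nat.descFactorial n m : Polynomial ℝ) * ((n - m : ℕ) : Polynomial ℝ) := by
      rw [← Nat.cast_mul, Nat.descFactorial_succ, Nat.mul_comm]
    have hexp : n - m - 1 = n - (m + 1) := by omega
    rw [hdesc, ← hexp]
    ring

theorem kth_derivative_expansion_at_pi
    (k : ℕ) (hk : 1 ≤ k) (f : ℝ → ℝ)
    (hf : ∀ θ : ℝ, f θ = θ ^ (k + 1) * (Real.pi - θ) ^ (k + 1)) :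
    ∃ q : Polynomial ℝ, ∀ θ : ℝ,
      iteratedDeriv k f θ =
        (Nat.factorial (k + 1) : ℝ) * (-1 : ℝ) ^ k * θ ^ (k + 1) * (Real.pi - θ)
          + (Real.pi - θ) ^ 2 * q.eval θ := by
  set g : Polynomial ℝ := C Real.pi - X with hg
  set P : Polynomial ℝ := X ^ (k + 1) * g ^ (k + 1) with hP
  have hfP : f = fun θ => P.eval θ := by
    funext θ; rw [hf]; simp [hP, hg]
  -- main polynomial identity
  have hmain : ∃ Q : Polynomial ℝ, derivative^[k] P =
      (Nat.factorial (k + 1) : Polynomial ℝ) * (-1 : Polynomial ℝ) ^ k * X ^ (k + 1) * g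
        + g ^ 2 * Q := by
    have hL := Polynomial.iterate_derivative_mul (n := k) (X ^ (k + 1) : Polynomial ℝ) (g ^ (k + 1))
    -- split off the i = k term
    have hdvd : g ^ 2 ∣ ∑ i ∈ Finset.range k,
        (k.choose i • (derivative^[k - i] (X ^ (k + 1) : Polynomial ℝ) * derivative^[i] (g ^ (k + 1)))) := by
      apply Finset.dvd_sum
      intro i hi
      have hi' : i < k := Finset.mem_range.mp hi
      have h1 : g ^ (k + 1 - i) ∣ derivative^[i] (g ^ (k + 1)) :=
        Polynomial.pow_sub_dvd_iterate_derivative_pow g (k + 1) i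
      have h2 : g ^ 2 ∣ g ^ (k + 1 - i) := pow_dvd_pow g (by omega)
      rw [nsmul_eq_mul]
      exact Dvd.dvd.mul_left (Dvd.dvd.mul_left (dvd_trans h2 h1) _) _
    obtain ⟨Q, hQ⟩ := hdvd
    refine ⟨Q, ?_⟩
    rw [hP, hL, Finset.sum_range_succ, hQ]
    have hterm : k.choose k • (derivative^[k - k] (X ^ (k + 1) : Polynomial ℝ) * derivative^[k] (g ^ (k + 1)))
        = (Nat.factorial (k + 1) : Polynomial ℝ) * (-1 : Polynomial ℝ) ^ k * X ^ (k + 1) * g := by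
      rw [Nat.choose_self, one_smul, Nat.sub_self, Function.iterate_zero_apply,
        hg, iterate_derivative_sub_pow Real.pi (k + 1) k (by omega)]
      have h1 : Nat.descFactorial (k + 1) k = Nat.factorial (k + 1) := by
        rw [Nat.descFactorial_eq_factorial_mul_choose, Nat.choose_succ_self_right,
          Nat.factorial_succ, Nat.mul_comm]
      have h2 : k + 1 - k = 1 := by omega
      rw [h1, h2, pow_one]
      ring
    rw [hterm]
    ring
  obtain ⟨Q, hQ⟩ := hmain
  refine ⟨Q, fun θ => ?_⟩
  rw [hfP, iteratedDeriv_polynomial_eval, hQ]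
  simp [hg]
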